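/- In the Brunner–Sidki–Vieira group G₂, the pair (μ,τ) is not an Engel pair: E_c(μ,τ) ≠ 1 for every c ∈ ℕ. -/

import Mathlib

namespace AutSG

variable {X Q : Type*}

/-- The action of a state `q` of a Mealy automaton with transition function `δ`
and output function `out` on finite words over the alphabet `X`. -/
def mAct (δ : Q → X → Q) (out : Q → X → X) : Q → List X → List X
  | _, [] => []
  | q, x :: w => out q x :: mAct δ out (δ q x) w

theorem mAct_bijective (δ : Q → X → Q) (out : Q → X → X)
    (hout : ∀ q, Function.Bijective (out q)) (q : Q) :
    Function.Bijective (mAct δ out q) := by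
  have key : ∀ (l₁ : List X) (q : Q) (l₂ : List X),
      mAct δ out q l₁ = mAct δ out q l₂ → l₁ = l₂ := by
    intro l₁
    induction l₁ with
    | nil =>
      intro q l₂ h
      cases l₂ with
      | nil => rfl
      | cons y u => exact absurd h (by simp [mAct])
    | cons x w ih =>
      intro q l₂ h
      cases l₂ with
      | nil => exact absurd h (by simp [mAct])
      | cons y u =>
        simp only [mAct, List.cons.injEq] at h
        obtain rfl : x = y := (hout q).1 h.1
        rw [ih (δ q x) u h.2]
  have key2 : ∀ (l : List X) (q : Q), ∃ m, mAct δ out q m = l := by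
    intro l
    induction l with
    | nil => exact fun q => ⟨[], rfl⟩
    | cons y u ih =>
      intro q
      obtain ⟨x, hx⟩ := (hout q).2 y
      obtain ⟨m, hm⟩ := ih (δ q x)
      exact ⟨x :: m, by simp [mAct, hx, hm]⟩
  exact ⟨fun {l₁ l₂} h => key l₁ q l₂ h, fun l => key2 l q⟩

/-- The permutation of `X*` induced by the state `q` of an invertible Mealy automaton,
as an element of `Equiv.Perm (List X)`.  We use the convention that permutations act
on the *right* via `rApp` below, so that the Lean group multiplication `g * h`
corresponds to "first `g`, then `h`", as in the usual convention for automaton groups. -/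
noncomputable def genPerm (δ : Q → X → Q) (out : Q → X → X)
    (hout : ∀ q, Function.Bijective (out q)) (q : Q) : Equiv.Perm (List X) :=
  (Equiv.ofBijective _ (mAct_bijective δ out hout q))⁻¹

/-- Right action of a permutation on words: `rApp g w` is `w^g`.
Note `rApp (g * h) w = rApp h (rApp g w)`. -/
def rApp (g : Equiv.Perm (List X)) (w : List X) : List X := g⁻¹ w

theorem rApp_genPerm (δ : Q → X → Q) (out : Q → X → X)
    (hout : ∀ q, Function.Bijective (out q)) (q : Q) (w : List X) :
    rApp (genPerm δ out hout q) w = mAct δ out q w := by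
  simp [rApp, genPerm, Equiv.ofBijective]

/-- Commutator with the convention `[x,y] = x⁻¹y⁻¹xy`. -/
def comm {G : Type*} [Group G] (x y : G) : G := x⁻¹ * y⁻¹ * x * y

/-- Conjugation with the convention `y^z = z⁻¹yz`. -/
def conj {G : Type*} [Group G] (y z : G) : G := z⁻¹ * y * z

/-- Iterated commutators: `E₀(g,h) = g`, `E_{c+1}(g,h) = [E_c(g,h), h]`. -/
def engel {G : Type*} [Group G] : ℕ → G → G → G
  | 0, g, _ => g
  | c + 1, g, h => comm (engel c g h) h

/-- `vStar v k` is the permutation `v*k` of `X*`: it maps `v ++ w` to `v ++ w^k`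
(with respect to the right action `rApp`) and fixes every word not having `v`
as a prefix. -/
def vStar [DecidableEq X] (v : List X) (k : Equiv.Perm (List X)) :
    Equiv.Perm (List X) where
  toFun w := if v <+: w then v ++ k (w.drop v.length) else w
  invFun w := if v <+: w then v ++ k.symm (w.drop v.length) else w
  left_inv w := by
    by_cases h : v <+: w
    · simp only [if_pos h, if_pos (List.prefix_append v _), List.drop_left,
        Equiv.symm_apply_apply]
      exact List.prefix_iff_eq_append.mp h
    · simp only [if_neg h]
  right_inv w := by
    by_cases h : v <+: w
    · simp only [if_pos h, if_pos (List.prefix_append v _), List.drop_left,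
        Equiv.apply_symm_apply]
      exact List.prefix_iff_eq_append.mp h
    · simp only [if_neg h]

end AutSG
namespace AutSG

/-- States of the Brunner–Sidki–Vieira automaton: `τ`, `μ`, `μ⁻¹` (written `mi`),
and the identity state `e`. -/
inductive BSVQ | t | m | mi | e
deriving DecidableEq

/-- Transition function (letters `1,2` are `0,1 : Fin 2`):
`(1w)^τ = 2w`, `(2w)^τ = 1(w^τ)`; `(1w)^μ = 2w`, `(2w)^μ = 1(w^{μ⁻¹})`;
and `μ⁻¹` satisfies `(1w)^{μ⁻¹} = 2(w^μ)`, `(2w)^{μ⁻¹} = 1w`. -/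
def bsvδ : BSVQ → Fin 2 → BSVQ
  | .t, 0 => .e
  | .t, _ => .t
  | .m, 0 => .e
  | .m, _ => .mi
  | .mi, 0 => .m
  | _, _ => .e

/-- Output function: all non-identity states swap the two letters. -/
def bsvOut : BSVQ → Fin 2 → Fin 2
  | .e, x => x
  | _, x => x + 1

theorem bsvOut_bij : ∀ q, Function.Bijective (bsvOut q) := by
  intro q; cases q <;> decide

/-- The generator `τ`: `(1w)^τ = 2w`, `(2w)^τ = 1(w^τ)`. -/
noncomputable def bsvτ : Equiv.Perm (List (Fin 2)) := genPerm bsvδ bsvOut bsvOut_bij .t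
/-- The generator `μ`: `(1w)^μ = 2w`, `(2w)^μ = 1(w^{μ⁻¹})`. -/
noncomputable def bsvμ : Equiv.Perm (List (Fin 2)) := genPerm bsvδ bsvOut bsvOut_bij .m

/-- The Brunner–Sidki–Vieira group `G₂ = ⟨τ, μ⟩`. -/
noncomputable def BSV : Subgroup (Equiv.Perm (List (Fin 2))) :=
  Subgroup.closure {bsvτ, bsvμ}

end AutSG


namespace AutSG
namespace NotEngel

open scoped Fin.NatCast Fin.CommRing

/-! ### A computable model of the actions of `τ±1, μ±1` -/

/-- Formal letters `τ, τ⁻¹, μ, μ⁻¹`. -/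
inductive L | t | ti | m | mi
deriving DecidableEq

/-- States of a 5-state automaton realizing all four letters (and the identity). -/
inductive MQ | T | Ti | M | Mi | E
deriving DecidableEq

def δ5 : MQ → Fin 2 → MQ
  | .T, 0 => .E
  | .T, _ => .T
  | .Ti, 0 => .Ti
  | .Ti, _ => .E
  | .M, 0 => .E
  | .M, _ => .Mi
  | .Mi, 0 => .M
  | .Mi, _ => .E
  | .E, _ => .E

def out5 : MQ → Fin 2 → Fin 2
  | .E, x => x
  | _, x => x + 1

def st : L → MQ
  | .t => .T
  | .ti => .Ti
  | .m => .M
  | .mi => .Mi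

/-- The action of a state on words. -/
def act (q : MQ) (w : List (Fin 2)) : List (Fin 2) := mAct δ5 out5 q w

@[simp] lemma act_nil (q : MQ) : act q [] = [] := rfl

lemma act_cons (q : MQ) (x : Fin 2) (v : List (Fin 2)) :
    act q (x :: v) = out5 q x :: act (δ5 q x) v := rfl

@[simp] lemma act_E : ∀ v, act .E v = v
  | [] => rfl
  | x :: v => by fin_cases x <;> simp [act_cons, δ5, out5, act_E v]

lemma act_T_Ti : ∀ v, act .T (act .Ti v) = v ∧ act .Ti (act .T v) = v
  | [] => ⟨rfl, rfl⟩
  | x :: v => by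
      obtain ⟨h1, h2⟩ := act_T_Ti v
      fin_cases x <;> constructor <;>
        simp_all [act_cons, δ5, out5] <;> rfl

lemma act_M_Mi : ∀ v, act .M (act .Mi v) = v ∧ act .Mi (act .M v) = v
  | [] => ⟨rfl, rfl⟩
  | x :: v => by
      obtain ⟨h1, h2⟩ := act_M_Mi v
      fin_cases x <;> constructor <;>
        simp_all [act_cons, δ5, out5] <;> rfl

/-- The original BSV automaton is a sub-automaton. -/
def embq : BSVQ → MQ
  | .t => .T
  | .m => .M
  | .mi => .Mi
  | .e => .E

lemma mAct_bsv_eq : ∀ (w : List (Fin 2)) (q : BSVQ),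
    mAct bsvδ bsvOut q w = act (embq q) w
  | [], _ => rfl
  | x :: v, q => by
      have hout : bsvOut q x = out5 (embq q) x := by cases q <;> rfl
      have hδ : embq (bsvδ q x) = δ5 (embq q) x := by
        cases q <;> fin_cases x <;> rfl
      rw [mAct, act_cons, hout, ← hδ, mAct_bsv_eq v]

/-! ### The four generator permutations and their `rApp` actions -/

noncomputable def lp : L → Equiv.Perm (List (Fin 2))
  | .t => bsvτ
  | .ti => bsvτ⁻¹
  | .m => bsvμ
  | .mi => bsvμ⁻¹

lemma rApp_bsvτ (w : List (Fin 2)) : rApp bsvτ w = act .T w := by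
  rw [bsvτ, rApp_genPerm, mAct_bsv_eq]; rfl

lemma rApp_bsvμ (w : List (Fin 2)) : rApp bsvμ w = act .M w := by
  rw [bsvμ, rApp_genPerm, mAct_bsv_eq]; rfl

lemma rApp_inv_gen (q : BSVQ) (qi : MQ)
    (hinv : ∀ v, mAct bsvδ bsvOut q (act qi v) = v) (w : List (Fin 2)) :
    rApp (genPerm bsvδ bsvOut bsvOut_bij q)⁻¹ w = act qi w := by
  have : rApp (genPerm bsvδ bsvOut bsvOut_bij q)⁻¹ w
      = (Equiv.ofBijective _ (mAct_bijective bsvδ bsvOut bsvOut_bij q)).symm w := by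
    simp [rApp, genPerm, Equiv.Perm.inv_def]
  rw [this, Equiv.symm_apply_eq]
  exact (hinv w).symm

lemma rApp_bsvτ_inv (w : List (Fin 2)) : rApp bsvτ⁻¹ w = act .Ti w := by
  refine rApp_inv_gen .t .Ti (fun v => ?_) w
  rw [mAct_bsv_eq]; exact (act_T_Ti v).1

lemma rApp_bsvμ_inv (w : List (Fin 2)) : rApp bsvμ⁻¹ w = act .Mi w := by
  refine rApp_inv_gen .m .Mi (fun v => ?_) w
  rw [mAct_bsv_eq]; exact (act_M_Mi v).1

lemma rApp_lp (ℓ : L) (w : List (Fin 2)) : rApp (lp ℓ) w = act (st ℓ) w := by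
  cases ℓ
  · exact rApp_bsvτ w
  · exact rApp_bsvτ_inv w
  · exact rApp_bsvμ w
  · exact rApp_bsvμ_inv w

/-! ### Words and their evaluation -/

/-- Evaluation of a word of letters on a binary word (first letter acts first). -/
def ev (w : List L) (v : List (Fin 2)) : List (Fin 2) :=
  w.foldl (fun v ℓ => act (st ℓ) v) v

@[simp] lemma ev_nil (v : List (Fin 2)) : ev [] v = v := rfl

lemma ev_cons (ℓ : L) (w : List L) (v : List (Fin 2)) :
    ev (ℓ :: w) v = ev w (act (st ℓ) v) := rfl

lemma ev_append (u w : List L) (v : List (Fin 2)) :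
    ev (u ++ w) v = ev w (ev u v) := List.foldl_append ..

lemma ev_empty : ∀ (w : List L), ev w [] = []
  | [] => rfl
  | ℓ :: w => by rw [ev_cons, act_nil, ev_empty w]

/-- The permutation given by a word. -/
noncomputable def wp (w : List L) : Equiv.Perm (List (Fin 2)) := (w.map lp).prod

lemma rApp_one (v : List (Fin 2)) : rApp 1 v = v := rfl

lemma rApp_mul (g h : Equiv.Perm (List (Fin 2))) (v : List (Fin 2)) :
    rApp (g * h) v = rApp h (rApp g v) := by
  simp [rApp, mul_inv_rev, Equiv.Perm.mul_apply]

@[simp] lemma wp_nil : wp [] = 1 := rfl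

lemma wp_cons (ℓ : L) (w : List L) : wp (ℓ :: w) = lp ℓ * wp w := by
  simp [wp]

lemma wp_append (u w : List L) : wp (u ++ w) = wp u * wp w := by
  simp [wp]

lemma wp_singleton (ℓ : L) : wp [ℓ] = lp ℓ := by simp [wp]

lemma rApp_wp : ∀ (w : List L) (v : List (Fin 2)), rApp (wp w) v = ev w v
  | [], v => rfl
  | ℓ :: w, v => by
      rw [wp_cons, rApp_mul, rApp_lp, ev_cons, rApp_wp w]

/-- A word acting trivially. -/
def triv (w : List L) : Prop := ∀ v, ev w v = v

lemma triv_of_wp_one {w : List L} (h : wp w = 1) : triv w := fun v => by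
  rw [← rApp_wp, h, rApp_one]

/-! ### Track splitting (first-level sections at the word level) -/

/-- `β ℓ` is the first letter on which `ℓ` has a nontrivial section. -/
def β : L → Fin 2
  | .t => 1
  | .ti => 0
  | .m => 1
  | .mi => 0

/-- The nontrivial section of each letter. -/
def sect : L → L
  | .t => .t
  | .ti => .ti
  | .m => .mi
  | .mi => .m

/-- Inverse letter. -/
def inv' : L → L
  | .t => .ti
  | .ti => .t
  | .m => .mi
  | .mi => .m

lemma fin2_cases (p q : Fin 2) : q = p ∨ q = p + 1 := by
  fin_cases p <;> fin_cases q <;> first | (left; rfl) | (right; rfl)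

lemma fin2_ne_add_one (r : Fin 2) : ¬ r = r + 1 := by fin_cases r <;> decide

lemma fin2_add_one_ne (r : Fin 2) : ¬ r + 1 = r := by fin_cases r <;> decide

/-- The section word of `w` along the track starting at side `p`. -/
def S : List L → Fin 2 → List L
  | [], _ => []
  | ℓ :: w, p => (if β ℓ = p then [sect ℓ] else []) ++ S w (p + 1)

@[simp] lemma S_nil (p : Fin 2) : S [] p = [] := rfl

lemma S_cons (ℓ : L) (w : List L) (p : Fin 2) :
    S (ℓ :: w) p = (if β ℓ = p then [sect ℓ] else []) ++ S w (p + 1) := rfl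

lemma act_letter (ℓ : L) (p : Fin 2) (v : List (Fin 2)) :
    act (st ℓ) (p :: v) =
      (p + 1) :: (if β ℓ = p then act (st (sect ℓ)) v else v) := by
  cases ℓ <;> fin_cases p <;> simp [act_cons, st, δ5, out5, β, sect] <;> rfl

/-- Key identity: evaluation on `p :: v` in terms of the track section word. -/
lemma ev_track : ∀ (w : List L) (p : Fin 2) (v : List (Fin 2)),
    ev w (p :: v) = (p + (w.length : Fin 2)) :: ev (S w p) v
  | [], p, v => by simp
  | ℓ :: w, p, v => by
      rw [ev_cons, act_letter, ev_track w (p + 1)]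
      by_cases h : β ℓ = p
      · rw [if_pos h, S_cons, if_pos h, List.singleton_append, ev_cons]
        congr 1
        simp only [List.length_cons]
        push_cast
        ring
      · rw [if_neg h, S_cons, if_neg h, List.nil_append]
        congr 1
        simp only [List.length_cons]
        push_cast
        ring

lemma triv_len {w : List L} (h : triv w) : (w.length : Fin 2) = 0 := by
  have := h [(0 : Fin 2)]
  rw [show ([(0 : Fin 2)]) = (0 : Fin 2) :: [] from rfl, ev_track] at this
  have := (List.cons.injEq .. ).mp this
  simpa using this.1

lemma natCast_fin2_zero_even {n : ℕ} (h : (n : Fin 2) = 0) : Even n := by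
  have hv : ((n : Fin 2) : ℕ) = n % 2 := Fin.val_natCast n 2
  rw [h] at hv
  exact Nat.even_iff.mpr hv.symm

lemma even_cast_fin2 {n : ℕ} (h : Even n) : (n : Fin 2) = 0 := by
  obtain ⟨k, rfl⟩ := h
  push_cast
  have : (k : Fin 2) + (k : Fin 2) = 2 * k := by ring
  rw [this, show (2 : Fin 2) = 0 by decide, zero_mul]

lemma triv_even {w : List L} (h : triv w) : Even w.length :=
  natCast_fin2_zero_even (triv_len h)

lemma triv_track {w : List L} (h : triv w) (p : Fin 2) : triv (S w p) := by
  intro v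
  have h2 := h (p :: v)
  rw [ev_track, triv_len h, add_zero] at h2
  exact ((List.cons.injEq ..).mp h2).2

/-! ### Lengths and exponents of the tracks -/

lemma S_length_le : ∀ (w : List L) (p : Fin 2), (S w p).length ≤ w.length
  | [], _ => le_rfl
  | ℓ :: w, p => by
      rw [S_cons, List.length_append, List.length_cons]
      have := S_length_le w (p + 1)
      by_cases h : β ℓ = p <;> simp [h] <;> omega

lemma S_length_add : ∀ (w : List L) (p : Fin 2),
    (S w p).length + (S w (p + 1)).length = w.length
  | [], _ => rfl
  | ℓ :: w, p => by
      have key := S_length_add w (p + 1)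
      have hp2 : p + 1 + 1 = p := by fin_cases p <;> decide
      rw [hp2] at key
      rw [S_cons, S_cons, hp2, List.length_append, List.length_append,
        List.length_cons]
      rcases fin2_cases p (β ℓ) with h | h
      · rw [if_pos h, if_neg (by rw [h]; exact fin2_ne_add_one p)]
        simp only [List.length_singleton, List.length_nil]
        omega
      · rw [if_neg (by rw [h]; exact fin2_add_one_ne p), if_pos h]
        simp only [List.length_singleton, List.length_nil]
        omega

/-- μ-exponent of a letter. -/
def em : L → ℤ
  | .m => 1
  | .mi => -1
  | _ => 0

/-- τ-exponent of a letter. -/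
def et : L → ℤ
  | .t => 1
  | .ti => -1
  | _ => 0

def xm (w : List L) : ℤ := (w.map em).sum
def xt (w : List L) : ℤ := (w.map et).sum

@[simp] lemma xm_nil : xm [] = 0 := rfl
@[simp] lemma xt_nil : xt [] = 0 := rfl

lemma xm_cons (ℓ : L) (w : List L) : xm (ℓ :: w) = em ℓ + xm w := by simp [xm]
lemma xt_cons (ℓ : L) (w : List L) : xt (ℓ :: w) = et ℓ + xt w := by simp [xt]

lemma xm_append (u w : List L) : xm (u ++ w) = xm u + xm w := by simp [xm]
lemma xt_append (u w : List L) : xt (u ++ w) = xt u + xt w := by simp [xt]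

lemma em_sect (ℓ : L) : em (sect ℓ) = - em ℓ := by cases ℓ <;> rfl
lemma et_sect (ℓ : L) : et (sect ℓ) = et ℓ := by cases ℓ <;> rfl

lemma xm_map_sect : ∀ w : List L, xm (w.map sect) = - xm w
  | [] => by simp
  | ℓ :: w => by
      rw [List.map_cons, xm_cons, xm_cons, em_sect, xm_map_sect w]; ring

lemma xt_map_sect : ∀ w : List L, xt (w.map sect) = xt w
  | [] => by simp
  | ℓ :: w => by
      rw [List.map_cons, xt_cons, xt_cons, et_sect, xt_map_sect w]

lemma xm_single_sect (ℓ : L) : xm [sect ℓ] = - em ℓ := by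
  rw [show xm [sect ℓ] = em (sect ℓ) + 0 from rfl, em_sect]; ring

lemma xt_single_sect (ℓ : L) : xt [sect ℓ] = et ℓ := by
  rw [show xt [sect ℓ] = et (sect ℓ) + 0 from rfl, et_sect]; ring

lemma xm_S_add : ∀ (w : List L) (p : Fin 2),
    xm (S w p) + xm (S w (p + 1)) = - xm w
  | [], _ => by simp
  | ℓ :: w, p => by
      have key := xm_S_add w (p + 1)
      have hp2 : p + 1 + 1 = p := by fin_cases p <;> decide
      rw [hp2] at key
      rw [S_cons, S_cons, hp2, xm_append, xm_append, xm_cons]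
      rcases fin2_cases p (β ℓ) with h | h
      · rw [if_pos h, if_neg (by rw [h]; exact fin2_ne_add_one p)]
        rw [xm_single_sect, xm_nil]
        linarith
      · rw [if_neg (by rw [h]; exact fin2_add_one_ne p), if_pos h]
        rw [xm_single_sect, xm_nil]
        linarith

lemma xt_S_add : ∀ (w : List L) (p : Fin 2),
    xt (S w p) + xt (S w (p + 1)) = xt w
  | [], _ => by simp
  | ℓ :: w, p => by
      have key := xt_S_add w (p + 1)
      have hp2 : p + 1 + 1 = p := by fin_cases p <;> decide
      rw [hp2] at key
      rw [S_cons, S_cons, hp2, xt_append, xt_append, xt_cons]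
      rcases fin2_cases p (β ℓ) with h | h
      · rw [if_pos h, if_neg (by rw [h]; exact fin2_ne_add_one p)]
        rw [xt_single_sect, xt_nil]
        linarith
      · rw [if_neg (by rw [h]; exact fin2_add_one_ne p), if_pos h]
        rw [xt_single_sect, xt_nil]
        linarith

/-! ### Stalled words -/

/-- `alt w p`: every letter of `w` goes to the track starting at side `p`. -/
def alt : List L → Fin 2 → Prop
  | [], _ => True
  | ℓ :: w, p => β ℓ = p ∧ alt w (p + 1)

lemma alt_nil (p : Fin 2) : alt [] p := trivial

lemma S_length_eq_iff_alt : ∀ (w : List L) (p : Fin 2),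
    (S w p).length = w.length ↔ alt w p
  | [], p => by simp [alt]
  | ℓ :: w, p => by
      rw [S_cons, List.length_append, List.length_cons]
      constructor
      · intro h
        by_cases hb : β ℓ = p
        · refine ⟨hb, (S_length_eq_iff_alt w (p + 1)).mp ?_⟩
          rw [if_pos hb] at h
          simp only [List.length_singleton] at h
          omega
        · rw [if_neg hb] at h
          simp only [List.length_nil] at h
          have := S_length_le w (p + 1)
          omega
      · rintro ⟨hb, ha⟩
        rw [if_pos hb]
        have := (S_length_eq_iff_alt w (p + 1)).mpr ha
        simp only [List.length_singleton]
        omega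

lemma alt_S_eq : ∀ {w : List L} {p : Fin 2}, alt w p → S w p = w.map sect
  | [], _, _ => rfl
  | ℓ :: w, p, h => by
      rw [S_cons, if_pos h.1, List.map_cons, List.singleton_append,
        alt_S_eq h.2]

lemma S_length_lt_of_not_alt {w : List L} {p : Fin 2} (h : ¬ alt w p) :
    (S w p).length < w.length :=
  lt_of_le_of_ne (S_length_le w p) (fun hc => h ((S_length_eq_iff_alt w p).mp hc))

/-- Alternating sum `±1` along a word. -/
def alte : List L → Fin 2 → ℤ
  | [], _ => 0
  | _ :: w, p => (if p = 1 then 1 else -1) + alte w (p + 1)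

lemma alte_eq : ∀ (w : List L) (p : Fin 2),
    alte w p = if Even w.length then 0 else (if p = 1 then 1 else -1)
  | [], p => by simp [alte]
  | ℓ :: w, p => by
      rw [alte, alte_eq w (p + 1)]
      have hsum : ∀ q : Fin 2,
          (if q = 1 then (1 : ℤ) else -1) + (if q + 1 = 1 then (1 : ℤ) else -1)
            = 0 := by decide
      have h1 : Even (ℓ :: w).length ↔ ¬ Even w.length := by
        simp [List.length_cons, Nat.even_add_one]
      by_cases h : Even w.length
      · have h2 : ¬ Even (ℓ :: w).length := by rw [h1]; exact not_not_intro h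
        rw [if_pos h, if_neg h2]
        ring
      · have h2 : Even (ℓ :: w).length := h1.mpr h
        rw [if_neg h, if_pos h2]
        exact hsum p

lemma alte_even {w : List L} (h : Even w.length) (p : Fin 2) : alte w p = 0 := by
  rw [alte_eq, if_pos h]

/-- Double stall at the same parity: all letters are `τ`-letters. -/
lemma stall_tau : ∀ (w : List L) (p : Fin 2), alt w p → alt (w.map sect) p →
    xm w = 0 ∧ xt w = alte w p
  | [], _, _, _ => ⟨rfl, rfl⟩
  | ℓ :: w, p, h1, h2 => by
      rw [List.map_cons] at h2
      obtain ⟨hb1, ha1⟩ := h1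
      obtain ⟨hb2, ha2⟩ := h2
      obtain ⟨ihm, iht⟩ := stall_tau w (p + 1) ha1 ha2
      have hl : ℓ = .t ∨ ℓ = .ti := by
        cases ℓ
        · left; rfl
        · right; rfl
        · exfalso; rw [← hb1] at hb2; exact absurd hb2 (by decide)
        · exfalso; rw [← hb1] at hb2; exact absurd hb2 (by decide)
      constructor
      · rw [xm_cons, ihm]
        rcases hl with rfl | rfl <;> simp [em]
      · rw [xt_cons, iht, alte]
        congr 1
        rcases hl with rfl | rfl
        · rw [if_pos (by rw [← hb1]; rfl)]; rfl
        · rw [if_neg (by rw [← hb1]; decide)]; rfl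

/-- Double stall at opposite parities: all letters are `μ`-letters. -/
lemma stall_mu : ∀ (w : List L) (p : Fin 2), alt w p → alt (w.map sect) (p + 1) →
    xt w = 0 ∧ xm w = alte w p
  | [], _, _, _ => ⟨rfl, rfl⟩
  | ℓ :: w, p, h1, h2 => by
      rw [List.map_cons] at h2
      obtain ⟨hb1, ha1⟩ := h1
      obtain ⟨hb2, ha2⟩ := h2
      have hp2 : p + 1 + 1 = p := by fin_cases p <;> decide
      rw [hp2] at ha2
      have ha2' : alt (w.map sect) ((p + 1) + 1) := by rw [hp2]; exact ha2
      obtain ⟨iht, ihm⟩ := stall_mu w (p + 1) ha1 (by rw [hp2]; exact ha2)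
      have hl : ℓ = .m ∨ ℓ = .mi := by
        cases ℓ
        · exfalso
          rw [← hb1] at hb2
          revert hb2; decide
        · exfalso
          rw [← hb1] at hb2
          revert hb2; decide
        · left; rfl
        · right; rfl
      constructor
      · rw [xt_cons, iht]
        rcases hl with rfl | rfl <;> simp [et]
      · rw [xm_cons, ihm, alte]
        congr 1
        rcases hl with rfl | rfl
        · rw [if_pos (by rw [← hb1]; rfl)]; rfl
        · rw [if_neg (by rw [← hb1]; decide)]; rfl

/-! ### The main lemma: trivial words have zero exponents -/

theorem main_lemma : ∀ (n : ℕ) (w : List L), w.length = n → triv w →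
    xm w = 0 ∧ xt w = 0 := by
  intro n
  induction n using Nat.strong_induction_on with
  | _ n IH =>
    intro w hn htriv
    rcases Nat.eq_zero_or_pos n with hz | hpos
    · subst hz
      rw [List.length_eq_zero_iff] at hn
      subst hn
      exact ⟨rfl, rfl⟩
    have heven : Even w.length := triv_even htriv
    -- splitting case handler
    have split_case : ∀ u : List L, u.length = n → triv u →
        (¬ alt u 0) → (¬ alt u 1) → xm u = 0 ∧ xt u = 0 := by
      intro u hun hutriv h0 h1
      have l0 : (S u 0).length < n := hun ▸ S_length_lt_of_not_alt h0
      have l1 : (S u 1).length < n := hun ▸ S_length_lt_of_not_alt h1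
      obtain ⟨m0, t0⟩ := IH _ l0 (S u 0) rfl (triv_track hutriv 0)
      obtain ⟨m1, t1⟩ := IH _ l1 (S u 1) rfl (triv_track hutriv 1)
      have hxm := xm_S_add u 0
      have hxt := xt_S_add u 0
      rw [show (0 : Fin 2) + 1 = 1 from rfl] at hxm hxt
      constructor
      · rw [m0, m1] at hxm; linarith
      · rw [t0, t1] at hxt; linarith
    -- stalled case handler
    have stall_case : ∀ p : Fin 2, alt w p → xm w = 0 ∧ xt w = 0 := by
      intro p hp
      set w' := w.map sect with hw'
      have hSw : S w p = w' := alt_S_eq hp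
      have htrivw' : triv w' := hSw ▸ triv_track htriv p
      have hlen' : w'.length = w.length := List.length_map _
      have heven' : Even w'.length := hlen' ▸ heven
      by_cases ha : alt w' p
      · obtain ⟨hm, ht⟩ := stall_tau w p hp ha
        exact ⟨hm, ht.trans (alte_even heven p)⟩
      by_cases hb : alt w' (p + 1)
      · obtain ⟨ht, hm⟩ := stall_mu w p hp hb
        exact ⟨hm.trans (alte_even heven p), ht⟩
      -- w' splits
      have hnot : (¬ alt w' 0) ∧ (¬ alt w' 1) := by
        rcases fin2_cases p 0 with h | h <;> rcases fin2_cases p 1 with h' | h' <;>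
          first
            | (exact ⟨h ▸ ha, h' ▸ ha⟩)
            | (exact ⟨h ▸ ha, h' ▸ hb⟩)
            | (exact ⟨h ▸ hb, h' ▸ ha⟩)
            | (exact ⟨h ▸ hb, h' ▸ hb⟩)
      obtain ⟨hm', ht'⟩ := split_case w' (hlen'.trans hn) htrivw' hnot.1 hnot.2
      constructor
      · have := xm_map_sect w
        rw [← hw'] at this
        rw [this] at hm'
        linarith
      · have := xt_map_sect w
        rw [← hw'] at this
        rw [this] at ht'
        exact ht'
    by_cases h0 : alt w 0
    · exact stall_case 0 h0
    by_cases h1 : alt w 1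
    · exact stall_case 1 h1
    exact split_case w hn htriv h0 h1

/-! ### Words for the Engel elements and their section exponents -/

def invw (w : List L) : List L := w.reverse.map inv'

@[simp] lemma invw_nil : invw [] = [] := rfl

lemma invw_length (w : List L) : (invw w).length = w.length := by
  simp [invw]

lemma invw_cons (ℓ : L) (w : List L) : invw (ℓ :: w) = invw w ++ [inv' ℓ] := by
  simp [invw]

lemma lp_inv' (ℓ : L) : lp (inv' ℓ) = (lp ℓ)⁻¹ := by
  cases ℓ <;> simp [lp, inv']

lemma wp_invw (w : List L) : wp (invw w) = (wp w)⁻¹ := by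
  induction w with
  | nil => simp
  | cons ℓ w ih =>
      rw [invw_cons, wp_append, wp_cons, wp_nil, mul_one, ih, lp_inv',
        wp_cons, mul_inv_rev]

/-- The word representing `engel c μ τ`. -/
def Ew : ℕ → List L
  | 0 => [.m]
  | c + 1 => invw (Ew c) ++ [.ti] ++ Ew c ++ [.t]

lemma wp_Ew : ∀ c, wp (Ew c) = engel c bsvμ bsvτ
  | 0 => by simp [Ew, wp_singleton, lp, engel]
  | c + 1 => by
      rw [Ew, wp_append, wp_append, wp_append, wp_invw, wp_Ew c,
        wp_singleton, wp_singleton]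
      rfl

lemma Ew_length_even : ∀ c, Even (Ew (c + 1)).length := by
  intro c
  rw [Ew]
  simp only [List.length_append, List.length_cons, List.length_nil, invw_length]
  exact ⟨(Ew c).length + 1, by ring⟩

/-! ### Track calculus: appending and inverses -/

lemma S_append : ∀ (u w : List L) (p : Fin 2),
    S (u ++ w) p = S u p ++ S w (p + (u.length : Fin 2))
  | [], w, p => by simp
  | ℓ :: u, w, p => by
      rw [List.cons_append, S_cons, S_cons, S_append u w (p + 1),
        List.append_assoc]
      congr 2
      simp only [List.length_cons]
      push_cast
      ring

lemma β_inv' (ℓ : L) : β (inv' ℓ) = β ℓ + 1 := by cases ℓ <;> rfl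

lemma sect_inv' (ℓ : L) : sect (inv' ℓ) = inv' (sect ℓ) := by cases ℓ <;> rfl

lemma invw_append (u w : List L) : invw (u ++ w) = invw w ++ invw u := by
  simp [invw]

lemma S_single (a : L) (q : Fin 2) :
    S [a] q = if β a = q then [sect a] else [] := by
  rw [S_cons, S_nil, List.append_nil]

lemma S_invw : ∀ (u : List L) (p : Fin 2),
    S (invw u) p = invw (S u (p + (u.length : Fin 2)))
  | [], p => by simp
  | ℓ :: u, p => by
      have h11 : ((1 : Fin 2) + 1) = 0 := by decide
      have hlen : (((ℓ :: u).length : ℕ) : Fin 2) = (u.length : Fin 2) + 1 := by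
        simp only [List.length_cons]; push_cast; ring
      have hq : p + ((u.length : Fin 2) + 1) + 1 = p + (u.length : Fin 2) := by
        rw [add_assoc p, add_assoc ((u.length : Fin 2)) 1 1, h11, add_zero]
      rw [invw_cons, S_append, S_invw u p, invw_length, hlen, S_single]
      rw [S_cons, hq, invw_append]
      congr 1
      by_cases h : β ℓ = p + ((u.length : Fin 2) + 1)
      · rw [if_pos h, if_pos (show β (inv' ℓ) = p + (u.length : Fin 2) by
          rw [β_inv', h, hq])]
        simp [invw, sect_inv']
      · rw [if_neg h, if_neg (fun hc => h (by
          rw [β_inv'] at hc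
          have h2 := congrArg (· + 1) hc
          change β ℓ + 1 + 1 = _ at h2
          rw [add_assoc (β ℓ) 1 1, h11, add_zero] at h2
          rw [h2, add_assoc]))]
        rfl

lemma xm_invw (w : List L) : xm (invw w) = - xm w := by
  induction w with
  | nil => simp
  | cons ℓ w ih =>
      rw [invw_cons, xm_append, xm_cons, ih, xm_cons, xm_nil]
      have : em (inv' ℓ) = - em ℓ := by cases ℓ <;> rfl
      rw [this]
      ring

/-- Exponent computation for the tracks of the Engel words. -/
lemma exp_tracks : ∀ c : ℕ,
    xm (S (Ew (c + 1)) 0) = (-2) ^ c ∧ xm (S (Ew (c + 1)) 1) = -((-2) ^ c)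
  | 0 => by decide
  | c + 1 => by
      obtain ⟨ih0, ih1⟩ := exp_tracks c
      have hcast : (((Ew (c + 1)).length : ℕ) : Fin 2) = 0 :=
        even_cast_fin2 (Ew_length_even c)
      have key : ∀ p : Fin 2, xm (S (Ew (c + 2)) p)
          = - xm (S (Ew (c + 1)) p) + xm (S [L.ti] p)
            + xm (S (Ew (c + 1)) (p + 1)) + xm (S [L.t] (p + 1)) := by
        intro p
        rw [show Ew (c + 2)
            = ((invw (Ew (c + 1)) ++ [L.ti]) ++ Ew (c + 1)) ++ [L.t] from rfl]
        rw [S_append, xm_append, S_append, xm_append, S_append, xm_append,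
          S_invw, xm_invw]
        have l0 : p + (((Ew (c + 1)).length : ℕ) : Fin 2) = p := by
          rw [hcast, add_zero]
        have l1 : p + (((invw (Ew (c + 1))).length : ℕ) : Fin 2) = p := by
          rw [invw_length, hcast, add_zero]
        have l2 : p + (((invw (Ew (c + 1)) ++ [L.ti]).length : ℕ) : Fin 2)
            = p + 1 := by
          simp only [List.length_append, invw_length, List.length_cons,
            List.length_nil]
          push_cast
          rw [hcast]
          ring
        have l3 : p + ((((invw (Ew (c + 1)) ++ [L.ti]) ++ Ew (c + 1)).length : ℕ)
            : Fin 2) = p + 1 := by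
          simp only [List.length_append, invw_length, List.length_cons,
            List.length_nil]
          push_cast
          rw [hcast]
          ring
        rw [l0, l1, l2, l3]
      have hti : ∀ p : Fin 2, xm (S [L.ti] p) = 0 := by decide
      have ht : ∀ p : Fin 2, xm (S [L.t] p) = 0 := by decide
      constructor
      · rw [key 0, hti, ht, show (0 : Fin 2) + 1 = 1 from rfl, ih0, ih1]
        ring
      · rw [key 1, hti, ht, show (1 : Fin 2) + 1 = 0 by decide, ih1, ih0]
        ring

end NotEngel
end AutSG

open AutSG in
/-- In the Brunner–Sidki–Vieira group `G₂`, the pair `(μ,τ)` is not an Engel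
pair: `E_c(μ,τ) ≠ 1` for every `c`. -/
theorem bsv_mu_tau_not_engel_pair : ∀ c : ℕ, engel c bsvμ bsvτ ≠ 1 := by
  open AutSG.NotEngel in
  intro c h
  cases c with
  | zero =>
      have h' : bsvμ = 1 := h
      have h1 : rApp bsvμ [(0 : Fin 2)] = [(1 : Fin 2)] := by
        rw [rApp_bsvμ]; rfl
      rw [h', rApp_one] at h1
      exact absurd h1 (by decide)
  | succ c =>
      have h1 : wp (Ew (c + 1)) = 1 := (wp_Ew (c + 1)).trans h
      have htriv : triv (Ew (c + 1)) := triv_of_wp_one h1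
      have htr0 : triv (S (Ew (c + 1)) 0) := triv_track htriv 0
      have hzero : xm (S (Ew (c + 1)) 0) = 0 :=
        (main_lemma _ _ rfl htr0).1
      rw [(exp_tracks c).1] at hzero
      have : ((-2 : ℤ) ^ c) ≠ 0 := pow_ne_zero _ (by norm_num)
      exact this hzero
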